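/- arXiv:1601.00487 — 2 statements merged into one kernel-verified Lean document; each statement's English description precedes it below -/
import Mathlib

section
/- Let D be a dimension function satisfying the regularized Boltzmann entropy hypothesis with S̃ strictly increasing in each coordinate, and let a, a' ∈ ℝ^{L+1} with a > 0 and a' > 0. If S̃ a < S̃ a', then for every δ ∈ Δ there exists δ' ∈ Δ such that D_{a,δ}(X) ≤ D_{a',δ'}(X) for all sufficiently large X. -/
open Filter Topology

/-- A dimension function: `D X b ≥ 1` for `X ≥ 1`, and monotone in `b` coordinatewise. -/
def IsDimFun (L : ℕ) (D : ℕ → (Fin (L + 1) → ℝ) → ℕ) : Prop :=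
  (∀ X : ℕ, 1 ≤ X → ∀ b : Fin (L + 1) → ℝ, 1 ≤ D X b) ∧
  (∀ X : ℕ, ∀ b c : Fin (L + 1) → ℝ, (∀ i, b i ≤ c i) → D X b ≤ D X c)

/-- Membership in `Δ`: a positive sequence tending to `0`. -/
def IsDelta (δ : ℕ → ℝ) : Prop :=
  (∀ X : ℕ, 0 < δ X) ∧ Tendsto δ atTop (nhds 0)

/-- The shell dimension `D_{a,δ}(X)`. -/
def shellDim (L : ℕ) (D : ℕ → (Fin (L + 1) → ℝ) → ℕ) (a : Fin (L + 1) → ℝ)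
    (δ : ℕ → ℝ) (X : ℕ) : ℕ :=
  D X (fun i => (1 + δ X) * a i) - D X (fun i => (1 - δ X) * a i)

/-- The regularized Boltzmann entropy hypothesis: `S` is continuous and
`(1/X) log (D X b) → S b` for every `b > 0`. -/
def RegBoltz (L : ℕ) (D : ℕ → (Fin (L + 1) → ℝ) → ℕ) (S : (Fin (L + 1) → ℝ) → ℝ) : Prop :=
  Continuous S ∧
  ∀ b : Fin (L + 1) → ℝ, (∀ i, 0 < b i) →
    Tendsto (fun X : ℕ => Real.log (D X b) / X) atTop (nhds (S b))

/-- `S` is strictly increasing in each coordinate on the positive orthant. -/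
def StrictInc (L : ℕ) (S : (Fin (L + 1) → ℝ) → ℝ) : Prop :=
  ∀ b c : Fin (L + 1) → ℝ, (∀ i, 0 < b i) → (∀ i, 0 < c i) →
    (∀ i, b i ≤ c i) → b ≠ c → S b < S c

/-- `S̄(a)`: sup over `δ ∈ Δ` of the limsup of `(1/X) log D_{a,δ}(X)`, in the extended reals. -/
noncomputable def SbarSup (L : ℕ) (D : ℕ → (Fin (L + 1) → ℝ) → ℕ) (a : Fin (L + 1) → ℝ) : EReal :=
  ⨆ δ : {δ : ℕ → ℝ // IsDelta δ},
    Filter.limsup (fun X : ℕ => ((Real.log (shellDim L D a δ.1 X) / X : ℝ) : EReal)) atTop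

/-- `S̲(a)`: sup over `δ ∈ Δ` of the liminf of `(1/X) log D_{a,δ}(X)`, in the extended reals. -/
noncomputable def SbarInf (L : ℕ) (D : ℕ → (Fin (L + 1) → ℝ) → ℕ) (a : Fin (L + 1) → ℝ) : EReal :=
  ⨆ δ : {δ : ℕ → ℝ // IsDelta δ},
    Filter.liminf (fun X : ℕ => ((Real.log (shellDim L D a δ.1 X) / X : ℝ) : EReal)) atTop

/-- Total variation distance between the distribution `q` on `ℕ` and the uniform
distribution on `{0, …, d-1}`. -/
noncomputable def TVu (q : ℕ → ℝ) (d : ℕ) : ℝ :=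
  (1 / 2) * (∑ i ∈ Finset.range d, |q i - 1 / (d : ℝ)|) + (1 / 2) * (∑' i : ℕ, q (i + d))

/-!
Since `S̃` is continuous, some slightly enlarged point `b = (1 + ε)•a` still has `S̃ b < S̃ a'`,
and for `X` large the shell `D_{a,δ}(X)` is bounded by `D X b`. For each fixed `η ∈ (0, 1)`,
`S̃ b` and `S̃ ((1 - η)•a')` both lie strictly below `S̃ ((1 + η)•a')`, so the exponential growth
rates give `D X b + D X ((1 - η)•a') ≤ D X ((1 + η)•a')` eventually, i.e. `D X b` fits into the
shell of `a'` of width `η`. A diagonal choice of `η = δ'(X) → 0` makes this hold along a single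
sequence `δ' ∈ Δ`.
-/

open Real

lemma Filter.exists_tendsto_atTop_eventually_diag {P : ℕ → ℕ → Prop}
    (h : ∀ n, ∀ᶠ X in atTop, P n X) :
    ∃ f : ℕ → ℕ, Tendsto f atTop atTop ∧ ∀ᶠ X in atTop, P (f X) X := by
  classical
  choose N hN using fun n => eventually_atTop.1 (h n)
  refine ⟨fun X => Nat.findGreatest (fun n => ∀ k ≤ n, N k ≤ X) X,
    tendsto_atTop.2 fun n => ?_, ?_⟩
  · filter_upwards [eventually_ge_atTop (n + ∑ k ∈ Finset.range (n + 1), N k)] with X hX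
    refine Nat.le_findGreatest (by omega) fun k hk => ?_
    have := Finset.single_le_sum (s := Finset.range (n + 1)) (f := N)
      (fun _ _ => Nat.zero_le _) (Finset.mem_range_succ_iff.2 hk)
    omega
  · filter_upwards [eventually_ge_atTop (N 0)] with X hX
    exact hN _ _ (Nat.findGreatest_spec (P := fun n => ∀ k ≤ n, N k ≤ X) (Nat.zero_le X)
      (by simpa using hX) _ le_rfl)

lemma eventually_const_mul_le_of_tendsto_log_div {u w : ℕ → ℝ} {s t C : ℝ} (hC : 0 < C)
    (hu : ∀ᶠ X in atTop, 0 < u X) (hw : ∀ᶠ X in atTop, 0 < w X)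
    (hus : Tendsto (fun X : ℕ => log (u X) / X) atTop (𝓝 s))
    (hwt : Tendsto (fun X : ℕ => log (w X) / X) atTop (𝓝 t)) (hst : s < t) :
    ∀ᶠ X in atTop, C * u X ≤ w X := by
  have hgap : Tendsto (fun X : ℕ => (X : ℝ) * (log (w X) / X - log (u X) / X)) atTop atTop :=
    tendsto_natCast_atTop_atTop.atTop_mul_pos (sub_pos.2 hst) (hwt.sub hus)
  filter_upwards [hgap.eventually_ge_atTop (log C), hu, hw, eventually_gt_atTop 0]
    with X hX hu hw hX0
  have hX0' : (X : ℝ) ≠ 0 := by positivity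
  rw [mul_sub, mul_div_cancel₀ _ hX0', mul_div_cancel₀ _ hX0'] at hX
  rw [← log_le_log_iff (by positivity) hw, log_mul hC.ne' hu.ne']
  linarith

lemma exists_pos_scale_lt {ι : Type*} {S : (ι → ℝ) → ℝ} (hS : Continuous S) {a : ι → ℝ} {c : ℝ}
    (h : S a < c) : ∃ ε > 0, S (fun i => (1 + ε) * a i) < c := by
  have hnear : ∀ᶠ t in 𝓝 (0 : ℝ), S (fun i => (1 + t) * a i) < c :=
    (hS.comp (by fun_prop) : Continuous fun t : ℝ => S (fun i => (1 + t) * a i)).continuousAt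
      |>.eventually_lt continuousAt_const (by simpa using h)
  exact ((hnear.filter_mono (nhdsWithin_le_nhds (s := Set.Ioi 0))).and
    self_mem_nhdsWithin).exists.imp fun ε hε => ⟨hε.2, hε.1⟩

lemma StrictInc.scale_lt_scale {L : ℕ} {S : (Fin (L + 1) → ℝ) → ℝ} (hSI : StrictInc L S)
    {a : Fin (L + 1) → ℝ} (ha : ∀ i, 0 < a i) {s t : ℝ} (hs : 0 < s) (hst : s < t) :
    S (fun i => s * a i) < S (fun i => t * a i) :=
  hSI _ _ (fun i => mul_pos hs (ha i)) (fun i => mul_pos (hs.trans hst) (ha i))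
    (fun i => mul_le_mul_of_nonneg_right hst.le (ha i).le)
    fun h => hst.ne (mul_right_cancel₀ (ha 0).ne' (congrFun h 0))

lemma RegBoltz.eventually_add_le {L : ℕ} {D : ℕ → (Fin (L + 1) → ℝ) → ℕ}
    {S : (Fin (L + 1) → ℝ) → ℝ} (hS : RegBoltz L D S) (hD : IsDimFun L D)
    {b b' c : Fin (L + 1) → ℝ} (hb : ∀ i, 0 < b i) (hb' : ∀ i, 0 < b' i) (hc : ∀ i, 0 < c i)
    (hbc : S b < S c) (hb'c : S b' < S c) :
    ∀ᶠ X in atTop, D X b + D X b' ≤ D X c := by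
  have hpos (v : Fin (L + 1) → ℝ) : ∀ᶠ X in atTop, (0 : ℝ) < D X v := by
    filter_upwards [eventually_ge_atTop 1] with X hX
    exact_mod_cast hD.1 X hX v
  filter_upwards [eventually_const_mul_le_of_tendsto_log_div two_pos (hpos b) (hpos c)
      (hS.2 b hb) (hS.2 c hc) hbc,
    eventually_const_mul_le_of_tendsto_log_div two_pos (hpos b') (hpos c)
      (hS.2 b' hb') (hS.2 c hc) hb'c] with X h h'
  exact_mod_cast (by linarith : (D X b : ℝ) + D X b' ≤ D X c)

/-- If `S̃ a < S̃ a'` then the shell dimension of `a` is eventually dominated by one of `a'`. -/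
theorem stmt_1 {L : ℕ} (D : ℕ → (Fin (L + 1) → ℝ) → ℕ) (S : (Fin (L + 1) → ℝ) → ℝ)
    (hD : IsDimFun L D) (hS : RegBoltz L D S) (hSI : StrictInc L S)
    (a a' : Fin (L + 1) → ℝ) (ha : ∀ i, 0 < a i) (ha' : ∀ i, 0 < a' i)
    (hlt : S a < S a') :
    ∀ δ : ℕ → ℝ, IsDelta δ → ∃ δ' : ℕ → ℝ, IsDelta δ' ∧
      ∃ X₀ : ℕ, ∀ X ≥ X₀, shellDim L D a δ X ≤ shellDim L D a' δ' X := by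
  intro δ hδ
  obtain ⟨ε, hε, hSb⟩ := exists_pos_scale_lt hS.1 hlt
  let η : ℕ → ℝ := fun n => 1 / (n + 2)
  have hη (n : ℕ) : 0 < η n ∧ η n < 1 := ⟨by positivity, by
    rw [div_lt_one (by positivity)]; linarith [(n.cast_nonneg : (0 : ℝ) ≤ n)]⟩
  have hdom (n : ℕ) : ∀ᶠ X in atTop, D X (fun i => (1 + ε) * a i) +
      D X (fun i => (1 - η n) * a' i) ≤ D X (fun i => (1 + η n) * a' i) := by
    have hpos (s : ℝ) (hs : 0 < s) : ∀ i, 0 < s * a' i := fun i => mul_pos hs (ha' i)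
    refine hS.eventually_add_le hD (fun i => mul_pos (by linarith) (ha i))
      (hpos _ (by linarith [hη n])) (hpos _ (by linarith [hη n])) (hSb.trans ?_)
      (hSI.scale_lt_scale ha' (by linarith [hη n]) (by linarith [hη n]))
    simpa using hSI.scale_lt_scale ha' one_pos (lt_add_of_pos_right 1 (hη n).1)
  obtain ⟨f, hf, hdomf⟩ := exists_tendsto_atTop_eventually_diag hdom
  refine ⟨fun X => η (f X), ⟨fun X => (hη _).1,
    (tendsto_const_nhds.div_atTop (tendsto_atTop_add_const_right _ 2
      tendsto_natCast_atTop_atTop)).comp hf⟩,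
    eventually_atTop.1 ?_⟩
  filter_upwards [hdomf, hδ.2.eventually_lt_const hε] with X hX hδX
  calc shellDim L D a δ X ≤ D X (fun i => (1 + δ X) * a i) := Nat.sub_le _ _
    _ ≤ D X (fun i => (1 + ε) * a i) :=
      hD.2 X _ _ fun i => mul_le_mul_of_nonneg_right (by linarith) (ha i).le
    _ ≤ shellDim L D a' (fun X => η (f X)) X := Nat.le_sub_of_add_le hX
end

section
/- Let D be a dimension function satisfying the regularized Boltzmann entropy hypothesis with S̃ strictly increasing in each coordinate, and let a ∈ ℝ^{L+1} with a > 0. Then there exists δ⁰ : ℕ → ℝ with δ⁰ X > 0 for all X and lim_{X→∞} δ⁰ X = 0 such that for every δ ∈ Δ with δ X > δ⁰ X for all X, the shell dimension D_{a,δ}(X) is positive for all sufficiently large X and lim_{X→∞} (1/X)·log D_{a,δ}(X) = S̃ a. (Lemma 2 of the paper.) -/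
open Filter Topology

/-!
For a fixed width `0 < ε < 1`, strict monotonicity gives `S ((1 - ε) • a) < S ((1 + ε) • a)`, so
`D X ((1 - ε) • a)` is exponentially negligible against `D X ((1 + ε) • a)` and the shell of width
`ε` has growth rate `S ((1 + ε) • a) > S a`. Shrinking the width `1 / (n + 2)` slowly enough along
`X` (a diagonal choice) yields `δ⁰ → 0` such that `log D_{a,δ}(X) / X ≥ S a` eventually whenever
`δ > δ⁰`, because shells grow with their width. The matching upper bound comes from
`D_{a,δ}(X) ≤ D X ((1 + ε) • a)` for every fixed `ε > 0` and the continuity of `S`.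
-/

/-- `v / u = exp (X * (log v / X - log u / X)) → 0` and `log (u - v) = log u + log (1 - v / u)`. -/
theorem tendsto_log_sub_div_of_lt {u v : ℕ → ℝ} {s t : ℝ}
    (hu0 : ∀ᶠ X in atTop, 0 < u X) (hv0 : ∀ᶠ X in atTop, 0 < v X)
    (hu : Tendsto (fun X : ℕ => Real.log (u X) / X) atTop (𝓝 s))
    (hv : Tendsto (fun X : ℕ => Real.log (v X) / X) atTop (𝓝 t)) (hts : t < s) :
    (∀ᶠ X in atTop, v X < u X) ∧
      Tendsto (fun X : ℕ => Real.log (u X - v X) / X) atTop (𝓝 s) := by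
  have hratio : Tendsto (fun X => v X / u X) atTop (𝓝 0) := by
    have hexponent : Tendsto (fun X : ℕ => (X : ℝ) * (Real.log (v X) / X - Real.log (u X) / X))
        atTop atBot :=
      tendsto_natCast_atTop_atTop.atTop_mul_neg (sub_neg.2 hts) (hv.sub hu)
    refine (Real.tendsto_exp_atBot.comp hexponent).congr' ?_
    filter_upwards [hu0, hv0, eventually_ne_atTop 0] with X hu hv hX
    rw [Function.comp_apply, mul_sub, mul_div_cancel₀ _ (Nat.cast_ne_zero.2 hX),
      mul_div_cancel₀ _ (Nat.cast_ne_zero.2 hX), Real.exp_sub, Real.exp_log hu, Real.exp_log hv]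
  have hlt : ∀ᶠ X in atTop, v X < u X := by
    filter_upwards [hratio.eventually (gt_mem_nhds one_pos), hu0] with X h hu
    rwa [div_lt_one hu] at h
  refine ⟨hlt, ?_⟩
  have hcorrection : Tendsto (fun X : ℕ => Real.log (1 - v X / u X) / X) atTop (𝓝 0) := by
    have hone : Tendsto (fun X => 1 - v X / u X) atTop (𝓝 1) := by
      simpa using (tendsto_const_nhds (x := (1 : ℝ))).sub hratio
    have : Tendsto (fun X => Real.log (1 - v X / u X)) atTop (𝓝 0) := by
      simpa using hone.log one_ne_zero
    exact this.div_atTop tendsto_natCast_atTop_atTop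
  have hsum := hu.add hcorrection
  rw [add_zero] at hsum
  refine hsum.congr' ?_
  filter_upwards [hu0, hlt] with X hu hlt
  have : 0 < 1 - v X / u X := by rw [sub_pos, div_lt_one hu]; exact hlt
  rw [← add_div, ← Real.log_mul hu.ne' this.ne', mul_sub, mul_one, mul_div_cancel₀ _ hu.ne']

theorem exists_tendsto_atTop_eventually_of_forall_eventually {P : ℕ → ℕ → Prop}
    (h : ∀ n, ∀ᶠ X in atTop, P n X) :
    ∃ k : ℕ → ℕ, Tendsto k atTop atTop ∧ ∀ᶠ X in atTop, P (k X) X := by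
  classical
  choose N hN using fun n => eventually_atTop.1 (h n)
  refine ⟨fun X => Nat.findGreatest (fun n => N n ≤ X) X, ?_, ?_⟩
  · exact tendsto_atTop_atTop.2 fun n => ⟨max n (N n), fun X hX =>
      Nat.le_findGreatest (le_of_max_le_left hX) (le_of_max_le_right hX)⟩
  · filter_upwards [eventually_ge_atTop (N 0)] with X hX
    exact hN _ _ (Nat.findGreatest_spec (P := fun n => N n ≤ X) (Nat.zero_le X) hX)

/-- Also at `m = 0`, since `Real.log 0 = 0`. -/
theorem Real.log_natCast_le_log_natCast {m n : ℕ} (h : m ≤ n) :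
    Real.log m ≤ Real.log n := by
  rcases m.eq_zero_or_pos with rfl | hm
  · simpa using Real.log_natCast_nonneg n
  · exact Real.log_le_log (by exact_mod_cast hm) (by exact_mod_cast h)

section Shell

variable {L : ℕ} {D : ℕ → (Fin (L + 1) → ℝ) → ℕ} {S : (Fin (L + 1) → ℝ) → ℝ}
  {a : Fin (L + 1) → ℝ}

theorem shellDim_le_shellDim (hD : IsDimFun L D) (ha : ∀ i, 0 ≤ a i) {δ δ' : ℕ → ℝ} {X : ℕ}
    (h : δ X ≤ δ' X) : shellDim L D a δ X ≤ shellDim L D a δ' X :=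
  tsub_le_tsub (hD.2 X _ _ fun i => mul_le_mul_of_nonneg_right (by linarith) (ha i))
    (hD.2 X _ _ fun i => mul_le_mul_of_nonneg_right (by linarith) (ha i))

theorem tendsto_log_shellDim_const_div (hD : IsDimFun L D) (hS : RegBoltz L D S)
    (hSI : StrictInc L S) (ha : ∀ i, 0 < a i) {ε : ℝ} (hε0 : 0 < ε) (hε1 : ε < 1) :
    (∀ᶠ X in atTop, 1 ≤ shellDim L D a (fun _ => ε) X) ∧
      Tendsto (fun X : ℕ => Real.log (shellDim L D a (fun _ => ε) X) / X) atTop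
        (𝓝 (S fun i => (1 + ε) * a i)) := by
  set b : Fin (L + 1) → ℝ := fun i => (1 - ε) * a i
  set c : Fin (L + 1) → ℝ := fun i => (1 + ε) * a i
  have hb : ∀ i, 0 < b i := fun i => mul_pos (by linarith) (ha i)
  have hc : ∀ i, 0 < c i := fun i => mul_pos (by linarith) (ha i)
  have hSbc : S b < S c := hSI b c hb hc (fun i => by nlinarith [ha i]) fun h => by
    have := congrFun h 0
    nlinarith [ha 0]
  have hpos : ∀ d, ∀ᶠ X in atTop, (0 : ℝ) < D X d := fun d => by
    filter_upwards [eventually_ge_atTop 1] with X hX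
    exact_mod_cast hD.1 X hX d
  obtain ⟨hlt, hlim⟩ := tendsto_log_sub_div_of_lt (hpos c) (hpos b) (hS.2 c hc) (hS.2 b hb) hSbc
  have hlt' : ∀ᶠ X in atTop, D X b < D X c := hlt.mono fun X h => by exact_mod_cast h
  refine ⟨hlt'.mono fun X h => show 1 ≤ D X c - D X b by omega, hlim.congr' ?_⟩
  filter_upwards [hlt'] with X h
  change _ = Real.log ((D X c - D X b : ℕ) : ℝ) / X
  rw [Nat.cast_sub h.le]

theorem eventually_one_le_shellDim_const_and_le_log_div (hD : IsDimFun L D)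
    (hS : RegBoltz L D S) (hSI : StrictInc L S) (ha : ∀ i, 0 < a i) {ε : ℝ} (hε0 : 0 < ε)
    (hε1 : ε < 1) :
    ∀ᶠ X in atTop, 1 ≤ shellDim L D a (fun _ => ε) X ∧
      S a ≤ Real.log (shellDim L D a (fun _ => ε) X) / X := by
  obtain ⟨hone, hlim⟩ := tendsto_log_shellDim_const_div hD hS hSI ha hε0 hε1
  have hSa : S a < S fun i => (1 + ε) * a i :=
    hSI _ _ ha (fun i => mul_pos (by linarith) (ha i)) (fun i => by nlinarith [ha i]) fun h => by
      have := congrFun h 0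
      nlinarith [ha 0]
  filter_upwards [hone, hlim.eventually (lt_mem_nhds hSa)] with X h1 h2
  exact ⟨h1, h2.le⟩

theorem eventually_log_shellDim_div_lt (hD : IsDimFun L D) (hS : RegBoltz L D S)
    (ha : ∀ i, 0 < a i) {δ : ℕ → ℝ} (hδ : Tendsto δ atTop (𝓝 0)) {r : ℝ} (hr : S a < r) :
    ∀ᶠ X in atTop, Real.log (shellDim L D a δ X) / X < r := by
  have hcont : Continuous fun t : ℝ => S fun i => (1 + t) * a i :=
    hS.1.comp (continuous_pi fun i => by fun_prop)
  obtain ⟨ε, hε0, hεr⟩ : ∃ ε > 0, (S fun i => (1 + ε) * a i) < r :=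
    ((hcont.tendsto 0).eventually (gt_mem_nhds (by simpa using hr))).exists_gt
  set c : Fin (L + 1) → ℝ := fun i => (1 + ε) * a i
  have hc : ∀ i, 0 < c i := fun i => mul_pos (by linarith) (ha i)
  filter_upwards [(hS.2 c hc).eventually (gt_mem_nhds hεr), hδ.eventually (gt_mem_nhds hε0)]
    with X hX hδX
  have hshell : shellDim L D a δ X ≤ D X c :=
    (Nat.sub_le _ _).trans (hD.2 X _ _ fun i => by nlinarith [ha i])
  exact (div_le_div_of_nonneg_right (Real.log_natCast_le_log_natCast hshell)
    X.cast_nonneg).trans_lt hX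

end Shell

/-- Lemma 2 of the paper. -/
theorem stmt_10 {L : ℕ} (D : ℕ → (Fin (L + 1) → ℝ) → ℕ) (S : (Fin (L + 1) → ℝ) → ℝ)
    (hD : IsDimFun L D) (hS : RegBoltz L D S) (hSI : StrictInc L S)
    (a : Fin (L + 1) → ℝ) (ha : ∀ i, 0 < a i) :
    ∃ δ₀ : ℕ → ℝ, (∀ X : ℕ, 0 < δ₀ X) ∧ Tendsto δ₀ atTop (nhds 0) ∧
      ∀ δ : ℕ → ℝ, IsDelta δ → (∀ X : ℕ, δ₀ X < δ X) →
        (∃ X₀ : ℕ, ∀ X ≥ X₀, 1 ≤ shellDim L D a δ X) ∧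
        Tendsto (fun X : ℕ => Real.log (shellDim L D a δ X) / X)
          atTop (nhds (S a)) := by
  obtain ⟨k, hk, hgood⟩ := exists_tendsto_atTop_eventually_of_forall_eventually fun n : ℕ =>
    eventually_one_le_shellDim_const_and_le_log_div hD hS hSI ha (ε := 1 / ((n : ℝ) + 2))
      (by positivity) (by rw [div_lt_one (by positivity)]; linarith [n.cast_nonneg (α := ℝ)])
  have hwidth : Tendsto (fun n : ℕ => 1 / ((n : ℝ) + 2)) atTop (𝓝 0) :=
    tendsto_const_nhds.div_atTop (tendsto_natCast_atTop_atTop.atTop_add tendsto_const_nhds)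
  refine ⟨fun X => 1 / ((k X : ℝ) + 2), fun X => by positivity, hwidth.comp hk, ?_⟩
  intro δ hδ hδ₀
  have hlower : ∀ᶠ X in atTop, 1 ≤ shellDim L D a δ X ∧
      S a ≤ Real.log (shellDim L D a δ X) / X := by
    filter_upwards [hgood] with X ⟨hone, hlog⟩
    have hle := shellDim_le_shellDim hD (fun i => (ha i).le) (hδ₀ X).le (δ := fun _ => _) (X := X)
    exact ⟨hone.trans hle, hlog.trans
      (div_le_div_of_nonneg_right (Real.log_natCast_le_log_natCast hle) X.cast_nonneg)⟩
  refine ⟨eventually_atTop.1 (hlower.mono fun _ h => h.1), tendsto_order.2 ⟨?_, ?_⟩⟩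
  · exact fun r hr => hlower.mono fun X h => hr.trans_le h.2
  · exact fun r hr => eventually_log_shellDim_div_lt hD hS ha hδ.2 hr
end
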